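/- The center of the Rubik's Cube group R3 has order 2 and is generated by the element (((0,…,0), id), ((1,…,1), id)), i.e. the superflip, whose first component is the identity of (C3 ≀ S8)^° and whose second component is the element of (C2 ≀ S12)^° with all twelve coordinates equal to 1 ∈ Z/2 and trivial permutation. -/

import Mathlib

open Equiv

/-- The automorphism of `(Z/n)^m` (written multiplicatively) permuting coordinates by `σ`. -/
def permAut (n m : ℕ) (σ : Equiv.Perm (Fin m)) :
    MulAut (Fin m → Multiplicative (ZMod n)) :=
  { Equiv.piCongrLeft' (fun _ => Multiplicative (ZMod n)) σ with
    map_mul' := fun _ _ => rfl }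

/-- The action of `S_m` on `(Z/n)^m` permuting coordinates. -/
def permHom (n m : ℕ) : Equiv.Perm (Fin m) →* MulAut (Fin m → Multiplicative (ZMod n)) where
  toFun := permAut n m
  map_one' := by ext x i; rfl
  map_mul' := fun σ τ => by ext x i; rfl

/-- The wreath product `C_n ≀ S_m = (Z/n)^m ⋊ S_m`, where `S_m` permutes coordinates. -/
abbrev Wr (n m : ℕ) :=
  SemidirectProduct (Fin m → Multiplicative (ZMod n)) (Equiv.Perm (Fin m)) (permHom n m)

/-- The homomorphism `C_n ≀ S_m → Z/n`, `(x, σ) ↦ ∑ i, x i`. -/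
def sumHom (n m : ℕ) : Wr n m →* Multiplicative (ZMod n) :=
  SemidirectProduct.lift
    (MonoidHom.mk' (fun x => ∏ i, x i) (by intro a b; simp [Finset.prod_mul_distrib]))
    1
    (by
      intro σ
      refine MonoidHom.ext fun x => ?_
      simp
      exact Equiv.prod_comp σ.symm x)

/-- `(C_n ≀ S_m)^°`, the kernel of `(x, σ) ↦ ∑ i, x i`. -/
abbrev WrO (n m : ℕ) : Subgroup (Wr n m) := (sumHom n m).ker

/-- The sign homomorphism `(C_n ≀ S_m)^° → {±1}`, `(x, σ) ↦ sign σ`. -/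
def signW (n m : ℕ) : ↥(WrO n m) →* ℤˣ :=
  (Equiv.Perm.sign.comp SemidirectProduct.rightHom).comp (WrO n m).subtype

/-- The fiber product `G ×_{φ,ψ} H = {(a, b) : φ a = ψ b}` of two group homomorphisms,
as a subgroup of the direct product `G × H`. -/
def fiberProduct {G H K : Type*} [Group G] [Group H] [Group K]
    (φ : G →* K) (ψ : H →* K) : Subgroup (G × H) where
  carrier := {p | φ p.1 = ψ p.2}
  one_mem' := by simp
  mul_mem' := by
    intro a b ha hb
    simp only [Set.mem_setOf_eq, Prod.fst_mul, Prod.snd_mul, map_mul] at *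
    rw [ha, hb]
  inv_mem' := by
    intro a ha
    simp only [Set.mem_setOf_eq, Prod.fst_inv, Prod.snd_inv, map_inv] at *
    rw [ha]

/-- The Rubik's Cube group `R3 = (C3 ≀ S8)^° ×_sign (C2 ≀ S12)^°`. -/
abbrev RubikR3 : Subgroup (↥(WrO 3 8) × ↥(WrO 2 12)) :=
  fiberProduct (signW 3 8) (signW 2 12)

/-- The edge part of the superflip: all twelve coordinates equal `1 ∈ Z/2`, trivial
permutation. -/
def superflipEdges : ↥(WrO 2 12) :=
  ⟨⟨fun _ => Multiplicative.ofAdd (1 : ZMod 2), 1⟩, by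
    rw [MonoidHom.mem_ker]
    show (∏ _i : Fin 12, Multiplicative.ofAdd (1 : ZMod 2)) * 1 = 1
    decide⟩

/-- The superflip `(((0,…,0), id), ((1,…,1), id))`: the identity in `(C3 ≀ S8)^°` together
with the element of `(C2 ≀ S12)^°` all of whose coordinates are `1 ∈ Z/2`, with trivial
permutation. -/
def superflip : ↥RubikR3 :=
  ⟨(1, superflipEdges), by
    show signW 3 8 1 = signW 2 12 superflipEdges
    simp [signW, superflipEdges, SemidirectProduct.rightHom]⟩

/-!
An element `z` of the center of `R3` commutes with every `(1, τ)`, `τ ∈ S₈`, since the sign map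
of `(C₂ ≀ S₁₂)^°` is onto and so `(1, τ)` is the corner part of some element of `R3`; likewise
for the edge part and `τ ∈ S₁₂`. As `S_m` has trivial center for `m ≥ 3`, both permutation
parts of `z` are trivial, and commuting with the transpositions makes both coordinate vectors
constant. A constant vector `c` lies in the kernel of the coordinate sum iff `m • c = 0`, which
forces `c = 0` on the corners (`8` is a unit mod `3`) and leaves `c ∈ {0, 1}` on the edges.
Conversely, constant vectors with trivial permutation are central in any `C_n ≀ S_m`.
-/

theorem Equiv.Perm.center_eq_bot {α : Type*} [DecidableEq α] (h : 3 ≤ ENat.card α) :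
    Subgroup.center (Perm α) = ⊥ := by
  refine (Subgroup.eq_bot_iff_forall _).2 fun σ hσ => Equiv.ext fun i => ?_
  by_contra hi
  change σ i ≠ i at hi
  obtain ⟨k, hki, hkσ⟩ := ENat.exists_ne_ne_of_three_le h i (σ i)
  have hcomm := congrArg (· i) (Subgroup.mem_center_iff.1 hσ (swap (σ i) k))
  simp only [Perm.mul_apply, swap_apply_left, swap_apply_of_ne_of_ne hi.symm hki.symm] at hcomm
  exact hkσ hcomm

open SemidirectProduct

namespace Wr

variable {n m : ℕ}

theorem permHom_apply (σ : Perm (Fin m)) (x : Fin m → Multiplicative (ZMod n)) (i : Fin m) :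
    permHom n m σ x i = x (σ.symm i) := rfl

theorem permHom_const (σ : Perm (Fin m)) (c : Multiplicative (ZMod n)) :
    permHom n m σ (fun _ => c) = fun _ => c := rfl

theorem inl_const_mem_center (c : Multiplicative (ZMod n)) :
    (inl (fun _ => c) : Wr n m) ∈ Subgroup.center (Wr n m) := by
  refine Subgroup.mem_center_iff.2 fun w => SemidirectProduct.ext ?_ ?_
  · simp only [mul_left, left_inl, right_inl, permHom_const, map_one]
    exact mul_comm _ _
  · simp only [mul_right, right_inl, mul_one, one_mul]

theorem inl_const_mem_WrO_iff (c : Multiplicative (ZMod n)) :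
    (inl (fun _ => c) : Wr n m) ∈ WrO n m ↔ c ^ m = 1 := by
  simp [sumHom, lift_inl]

theorem inr_mem_WrO (τ : Perm (Fin m)) : (inr τ : Wr n m) ∈ WrO n m := by
  simp [sumHom, lift_inr]

theorem eq_inl_const_of_forall_commute_inr (hm : 3 ≤ m) {w : Wr n m}
    (hw : ∀ τ, Commute (inr τ) w) : ∃ c, w = inl (fun _ => c) := by
  have hright : w.right = 1 := by
    have : w.right ∈ Subgroup.center (Perm (Fin m)) :=
      Subgroup.mem_center_iff.2 fun τ => congrArg right (hw τ)
    rwa [Perm.center_eq_bot (by simpa using hm), Subgroup.mem_bot] at this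
  have hleft : ∀ i j, w.left i = w.left j := fun i j => by
    have := congrArg (fun v : Wr n m => v.left i) (hw (swap i j))
    simpa [hright, permHom_apply] using this.symm
  refine ⟨w.left ⟨0, by omega⟩, SemidirectProduct.ext (funext fun i => hleft _ _) hright⟩

end Wr

namespace fiberProduct

variable {G H K : Type*} [Group G] [Group H] [Group K] {φ : G →* K} {ψ : H →* K}

theorem commute_fst_of_mem_center {z : fiberProduct φ ψ} (hz : z ∈ Subgroup.center _)
    {a : G} {b : H} (hab : φ a = ψ b) : Commute a (z : G × H).1 :=
  congrArg (fun w : fiberProduct φ ψ => (w : G × H).1) (Subgroup.mem_center_iff.1 hz ⟨(a, b), hab⟩)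

theorem commute_snd_of_mem_center {z : fiberProduct φ ψ} (hz : z ∈ Subgroup.center _)
    {a : G} {b : H} (hab : φ a = ψ b) : Commute b (z : G × H).2 :=
  congrArg (fun w : fiberProduct φ ψ => (w : G × H).2) (Subgroup.mem_center_iff.1 hz ⟨(a, b), hab⟩)

end fiberProduct

def inrWrO (n : ℕ) {m : ℕ} (τ : Perm (Fin m)) : WrO n m := ⟨inr τ, Wr.inr_mem_WrO τ⟩

theorem signW_inrWrO (n : ℕ) {m : ℕ} (τ : Perm (Fin m)) :
    signW n m (inrWrO n τ) = Perm.sign τ := rfl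

theorem signW_surjective (n : ℕ) {m : ℕ} (hm : 2 ≤ m) : Function.Surjective (signW n m) := by
  have : Nontrivial (Fin m) := Fin.nontrivial_iff_two_le.2 hm
  intro ε
  obtain ⟨τ, rfl⟩ := Perm.sign_surjective (Fin m) ε
  exact ⟨inrWrO n τ, signW_inrWrO n τ⟩

section

variable {n m n' m' : ℕ} {z : fiberProduct (signW n m) (signW n' m')}

theorem exists_fst_eq_inl_const_of_mem_center (hm : 3 ≤ m) (hm' : 2 ≤ m')
    (hz : z ∈ Subgroup.center _) :
    ∃ c, ((z : WrO n m × WrO n' m').1 : Wr n m) = inl (fun _ => c) ∧ c ^ m = 1 := by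
  obtain ⟨c, hc⟩ := Wr.eq_inl_const_of_forall_commute_inr hm fun τ => by
    obtain ⟨b, hb⟩ := signW_surjective n' hm' (signW n m (inrWrO n τ))
    exact congrArg Subtype.val (fiberProduct.commute_fst_of_mem_center hz hb.symm)
  exact ⟨c, hc, (Wr.inl_const_mem_WrO_iff c).1 (hc ▸ (z : WrO n m × WrO n' m').1.2)⟩

theorem exists_snd_eq_inl_const_of_mem_center (hm : 2 ≤ m) (hm' : 3 ≤ m')
    (hz : z ∈ Subgroup.center _) :
    ∃ c, ((z : WrO n m × WrO n' m').2 : Wr n' m') = inl (fun _ => c) ∧ c ^ m' = 1 := by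
  obtain ⟨c, hc⟩ := Wr.eq_inl_const_of_forall_commute_inr hm' fun τ => by
    obtain ⟨a, ha⟩ := signW_surjective n hm (signW n' m' (inrWrO n' τ))
    exact congrArg Subtype.val (fiberProduct.commute_snd_of_mem_center hz ha)
  exact ⟨c, hc, (Wr.inl_const_mem_WrO_iff c).1 (hc ▸ (z : WrO n m × WrO n' m').2.2)⟩

end

theorem RubikR3.ext {x y : RubikR3}
    (h₁ : ((x : WrO 3 8 × WrO 2 12).1 : Wr 3 8) = (y : WrO 3 8 × WrO 2 12).1)
    (h₂ : ((x : WrO 3 8 × WrO 2 12).2 : Wr 2 12) = (y : WrO 3 8 × WrO 2 12).2) : x = y :=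
  Subtype.ext (Prod.ext (Subtype.ext h₁) (Subtype.ext h₂))

theorem superflip_fst : ((superflip : WrO 3 8 × WrO 2 12).1 : Wr 3 8) = 1 := rfl

theorem superflip_snd :
    ((superflip : WrO 3 8 × WrO 2 12).2 : Wr 2 12) = inl (fun _ => Multiplicative.ofAdd 1) := rfl

theorem superflip_mem_center : superflip ∈ Subgroup.center RubikR3 :=
  Subgroup.mem_center_iff.2 fun g => RubikR3.ext (by simp [superflip_fst])
    (by simpa [superflip_snd] using Subgroup.mem_center_iff.1 (Wr.inl_const_mem_center _) _)

theorem superflip_mul_self : superflip * superflip = 1 := by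
  refine RubikR3.ext (by simp [superflip_fst]) ?_
  simp only [Subgroup.coe_mul, Prod.snd_mul, superflip_snd, OneMemClass.coe_one, Prod.snd_one]
  rw [← map_mul, ← map_one (inl : _ →* Wr 2 12)]
  congr 1
  decide

theorem orderOf_superflip : orderOf superflip = 2 := by
  have : Fact (Nat.Prime 2) := ⟨Nat.prime_two⟩
  refine orderOf_eq_prime ((pow_two _).trans superflip_mul_self) fun h => ?_
  have := congrArg (fun x : RubikR3 => ((x : WrO 3 8 × WrO 2 12).2 : Wr 2 12).left 0) h
  exact absurd this (by decide)

theorem center_RubikR3_le_zpowers_superflip :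
    Subgroup.center RubikR3 ≤ Subgroup.zpowers superflip := by
  intro z hz
  obtain ⟨c₁, hz₁, hc₁⟩ := exists_fst_eq_inl_const_of_mem_center (by norm_num) (by norm_num) hz
  obtain ⟨c₂, hz₂, -⟩ := exists_snd_eq_inl_const_of_mem_center (by norm_num) (by norm_num) hz
  obtain rfl : c₁ = 1 := (by decide : ∀ c : Multiplicative (ZMod 3), c ^ 8 = 1 → c = 1) c₁ hc₁
  rcases (by decide : ∀ c : Multiplicative (ZMod 2), c = 1 ∨ c = .ofAdd 1) c₂ with rfl | rfl
  · obtain rfl : z = 1 := RubikR3.ext (hz₁.trans (map_one _)) (hz₂.trans (map_one _))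
    exact Subgroup.one_mem _
  · obtain rfl : z = superflip := RubikR3.ext (hz₁.trans (map_one _)) hz₂
    exact Subgroup.mem_zpowers _

/-- The center of the Rubik's Cube group `R3` has order `2` and is generated by the
superflip. -/
theorem rubik_R3_center :
    Nat.card (Subgroup.center ↥RubikR3) = 2 ∧
    Subgroup.center ↥RubikR3 = Subgroup.zpowers superflip := by
  have hcenter : Subgroup.center ↥RubikR3 = Subgroup.zpowers superflip :=
    le_antisymm center_RubikR3_le_zpowers_superflip (Subgroup.zpowers_le.2 superflip_mem_center)
  exact ⟨by rw [hcenter, Nat.card_zpowers, orderOf_superflip], hcenter⟩
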